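/- arXiv:2106.08303 — 3 statements merged into one kernel-verified Lean document; each statement's English description precedes it below -/
import Mathlib

section
/- Let $k$ be a positive integer, let $n \ge k+3$, and let $M_k$ be a minimum distance-$k$ resolving set of the path $P_n$ with vertices $u_0, u_1, \ldots, u_{n-1}$. Then: (a) every gap of $M_k$ contains at most $2k+1$ vertices, the initial gap of $M_k$ contains at most $k+1$ vertices, and the terminal gap of $M_k$ contains at most $k+1$ vertices; moreover, it is not possible both that some gap of $M_k$ contains $2k+1$ vertices and that the union gap of $M_k$ contains $2k+1$ vertices, and at most one gap of $M_k$ contains $2k+1$ vertices; (b) if a gap of $M_k$ contains at least $k+1$ vertices, then each of its neighboring gaps contains at most $k$ vertices; and if the initial gap or the terminal gap of $M_k$ is nonempty, then its neighboring gap contains at most $k$ vertices. -/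
open SimpleGraph

/-- The distance-`k` truncated distance `dₖ(x,y) = min{d(x,y), k+1}`, valued in `ℕ∞`
(so unreachable pairs have distance `⊤`, which is truncated to `k+1`). -/
noncomputable def distK {V : Type*} (G : SimpleGraph V) (k : ℕ) (x y : V) : ℕ∞ :=
  min (G.edist x y) (k + 1)

/-- `S` is a distance-`k` resolving set of `G`. -/
def IsDistKResolving {V : Type*} (G : SimpleGraph V) (k : ℕ) (S : Set V) : Prop :=
  ∀ x y : V, x ≠ y → ∃ z ∈ S, distK G k x z ≠ distK G k y z

/-- The distance-`k` dimension of a finite graph `G`: the minimum cardinality of a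
distance-`k` resolving set of `G`. -/
noncomputable def dimK {V : Type*} [Fintype V] (G : SimpleGraph V) (k : ℕ) : ℕ :=
  sInf { m | ∃ S : Finset V, IsDistKResolving G k ↑S ∧ S.card = m }

/-- `IsPathGap M i l` : on the path `u₀, …, u_{n-1}`, the vertices `uᵢ` and `u_{i+l+1}`
are neighboring vertices of `M` and the `l` vertices `u_{i+1}, …, u_{i+l}` strictly
between them form the corresponding gap of `M`. -/
def IsPathGap {n : ℕ} (M : Set (Fin n)) (i l : ℕ) : Prop :=
  ∃ (h1 : i < n) (h2 : i + l + 1 < n),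
    (⟨i, h1⟩ : Fin n) ∈ M ∧ (⟨i + l + 1, h2⟩ : Fin n) ∈ M ∧
      ∀ (t : ℕ) (ht : t < n), i < t → t < i + l + 1 → (⟨t, ht⟩ : Fin n) ∉ M

/-- `InitGapSize M x` : the initial gap of `M` is `{u₀, …, u_{x-1}}`, i.e. `uₓ` is the
vertex of `M` closest to `u₀`. -/
def InitGapSize {n : ℕ} (M : Set (Fin n)) (x : ℕ) : Prop :=
  ∃ (h : x < n), (⟨x, h⟩ : Fin n) ∈ M ∧
    ∀ (t : ℕ) (ht : t < n), t < x → (⟨t, ht⟩ : Fin n) ∉ M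

/-- `TermGapSize M y` : the terminal gap of `M` is `{u_{n-y}, …, u_{n-1}}`, i.e.
`u_{n-1-y}` is the vertex of `M` closest to `u_{n-1}`. -/
def TermGapSize {n : ℕ} (M : Set (Fin n)) (y : ℕ) : Prop :=
  y ≤ n - 1 ∧ ∃ (h : n - 1 - y < n), (⟨n - 1 - y, h⟩ : Fin n) ∈ M ∧
    ∀ (t : ℕ) (ht : t < n), n - 1 - y < t → (⟨t, ht⟩ : Fin n) ∉ M

/-!
On the path, `dₖ(u_p, z) = min (|p - z|, k + 1)`, so two distinct vertices `u_p ≠ u_q` such that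
every `z ∈ M` is either equidistant from them or at distance more than `k` from both are not
separated by `M`. Each forbidden configuration of gaps produces such a pair: two adjacent
vertices in the middle of a gap with more than `2k + 1` vertices, the two end vertices of a long
initial or terminal gap, the midpoints of two gaps of size `2k + 1`, an end vertex and the
midpoint of a `(2k + 1)`-gap when the union gap has `2k + 1` vertices, or the two neighbours of
the vertex of `M` shared by two gaps of size at least `k + 1`.
-/

theorem IsDistKResolving.eq_of_forall_distK_eq {V : Type*} {G : SimpleGraph V} {k : ℕ}
    {S : Set V} (hS : IsDistKResolving G k S) {x y : V}
    (h : ∀ z ∈ S, distK G k x z = distK G k y z) : x = y := by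
  by_contra hxy
  obtain ⟨z, hz, hne⟩ := hS x y hxy
  exact hne (h z hz)

namespace SimpleGraph

variable {n : ℕ}

theorem pathGraph_edist_le_of_val_eq_add {d : ℕ} (a b : Fin n) (h : b.val = a.val + d) :
    (pathGraph n).edist a b ≤ d := by
  induction d generalizing a with
  | zero => simp [Fin.ext (by omega : a.val = b.val)]
  | succ d ih =>
    let c : Fin n := ⟨a.val + 1, by omega⟩
    have hac : (pathGraph n).edist a c = 1 :=
      edist_eq_one_iff_adj.mpr (pathGraph_adj.mpr (.inl rfl))
    calc (pathGraph n).edist a b ≤ (pathGraph n).edist a c + (pathGraph n).edist c b :=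
          SimpleGraph.edist_triangle
      _ ≤ 1 + d := by rw [hac]; exact add_le_add_right (ih c (by simp [c]; omega)) 1
      _ = ↑(d + 1) := by push_cast; ring

theorem pathGraph_dist_val_le_length {a b : Fin n} (p : (pathGraph n).Walk a b) :
    a.val.dist b.val ≤ p.length := by
  induction p with
  | nil => simp
  | cons h _ ih =>
    rw [pathGraph_adj] at h
    rw [Walk.length_cons]
    unfold Nat.dist at ih ⊢
    omega

theorem pathGraph_edist (a b : Fin n) : (pathGraph n).edist a b = a.val.dist b.val := by
  refine le_antisymm ?_ (edist_eq_sInf ▸ le_sInf <| Set.forall_mem_range.mpr fun p ↦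
    Nat.cast_le.mpr (pathGraph_dist_val_le_length p))
  rcases le_total a.val b.val with hab | hab
  · exact pathGraph_edist_le_of_val_eq_add a b (by unfold Nat.dist; omega)
  · rw [edist_comm]
    exact pathGraph_edist_le_of_val_eq_add b a (by unfold Nat.dist; omega)

theorem distK_pathGraph (k : ℕ) (a b : Fin n) :
    distK (pathGraph n) k a b = ↑(min (a.val.dist b.val) (k + 1)) := by
  rw [distK, pathGraph_edist, Nat.mono_cast.map_min]
  rfl

end SimpleGraph

variable {n : ℕ} {M : Set (Fin n)}

theorem IsPathGap.lt {i l : ℕ} (h : IsPathGap M i l) : i + l + 1 < n :=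
  h.snd.fst

theorem IsPathGap.le_or_le {i l : ℕ} (h : IsPathGap M i l) {z : Fin n} (hz : z ∈ M) :
    z.val ≤ i ∨ i + l + 1 ≤ z.val := by
  obtain ⟨-, -, -, -, hgap⟩ := h
  by_contra! hz'
  exact hgap z.val z.isLt hz'.1 hz'.2 hz

theorem InitGapSize.lt {x : ℕ} (h : InitGapSize M x) : x < n :=
  h.fst

theorem InitGapSize.le {x : ℕ} (h : InitGapSize M x) {z : Fin n} (hz : z ∈ M) :
    x ≤ z.val := by
  obtain ⟨-, -, hgap⟩ := h
  by_contra! hz'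
  exact hgap z.val z.isLt hz' hz

theorem TermGapSize.le {y : ℕ} (h : TermGapSize M y) {z : Fin n} (hz : z ∈ M) :
    z.val ≤ n - 1 - y := by
  obtain ⟨-, -, -, hgap⟩ := h
  by_contra! hz'
  exact hgap z.val z.isLt hz' hz

namespace IsDistKResolving

variable {k : ℕ}

theorem pathGraph_eq_of_forall_dist (hM : IsDistKResolving (pathGraph n) k M) (p q : Fin n)
    (h : ∀ z ∈ M, p.val.dist z = q.val.dist z ∨ k < p.val.dist z ∧ k < q.val.dist z) :
    p = q := by
  refine hM.eq_of_forall_distK_eq fun z hz ↦ ?_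
  rw [distK_pathGraph, distK_pathGraph]
  have := h z hz
  congr 1
  omega

theorem pathGraph_isPathGap_le (hM : IsDistKResolving (pathGraph n) k M)
    {i l : ℕ} (hg : IsPathGap M i l) : l ≤ 2 * k + 1 := by
  by_contra! hl
  have := hg.lt
  refine absurd (hM.pathGraph_eq_of_forall_dist
    ⟨i + k + 1, by omega⟩ ⟨i + k + 2, by omega⟩ fun z hz ↦ ?_) (by simp)
  have := hg.le_or_le hz
  simp only [Nat.dist]
  omega

theorem pathGraph_initGapSize_le (hM : IsDistKResolving (pathGraph n) k M)
    {x : ℕ} (hx : InitGapSize M x) : x ≤ k + 1 := by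
  by_contra! hlong
  have := hx.lt
  refine absurd (hM.pathGraph_eq_of_forall_dist
    ⟨0, by omega⟩ ⟨1, by omega⟩ fun z hz ↦ ?_) (by simp)
  have := hx.le hz
  simp only [Nat.dist]
  omega

theorem pathGraph_termGapSize_le (hM : IsDistKResolving (pathGraph n) k M)
    {y : ℕ} (hy : TermGapSize M y) : y ≤ k + 1 := by
  by_contra! hlong
  have := hy.1
  refine absurd (hM.pathGraph_eq_of_forall_dist
    ⟨n - 1, by omega⟩ ⟨n - 2, by omega⟩ fun z hz ↦ ?_)
    (by simp only [Fin.mk.injEq]; omega)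
  have := hy.le hz
  simp only [Nat.dist]
  omega

theorem pathGraph_eq_of_isPathGap_two_mul_add_one (hM : IsDistKResolving (pathGraph n) k M)
    {i i' : ℕ} (hg : IsPathGap M i (2 * k + 1)) (hg' : IsPathGap M i' (2 * k + 1)) : i = i' := by
  have := hg.lt
  have := hg'.lt
  have hmid := hM.pathGraph_eq_of_forall_dist
    ⟨i + k + 1, by omega⟩ ⟨i' + k + 1, by omega⟩ fun z hz ↦ by
      have := hg.le_or_le hz
      have := hg'.le_or_le hz
      simp only [Nat.dist]
      omega
  simpa using hmid

theorem pathGraph_initGapSize_add_termGapSize_ne (hM : IsDistKResolving (pathGraph n) k M)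
    {i x y : ℕ} (hg : IsPathGap M i (2 * k + 1)) (hx : InitGapSize M x) (hy : TermGapSize M y) :
    x + y ≠ 2 * k + 1 := by
  intro hxy
  have := hg.lt
  have := hy.1
  rcases le_or_gt (k + 1) x with hbig | hbig
  · refine absurd (hM.pathGraph_eq_of_forall_dist
      ⟨0, by omega⟩ ⟨i + k + 1, by omega⟩ fun z hz ↦ ?_) (by simp)
    have := hg.le_or_le hz
    have := hx.le hz
    simp only [Nat.dist]
    omega
  · refine absurd (hM.pathGraph_eq_of_forall_dist
      ⟨n - 1, by omega⟩ ⟨i + k + 1, by omega⟩ fun z hz ↦ ?_)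
      (by simp only [Fin.mk.injEq]; omega)
    have := hg.le_or_le hz
    have := hy.le hz
    simp only [Nat.dist]
    omega

theorem pathGraph_isPathGap_le_or_le_of_adjacent (hM : IsDistKResolving (pathGraph n) k M)
    {i l l' : ℕ} (hg : IsPathGap M i l) (hg' : IsPathGap M (i + l + 1) l') :
    l ≤ k ∨ l' ≤ k := by
  by_contra! hl
  have := hg'.lt
  refine absurd (hM.pathGraph_eq_of_forall_dist
    ⟨i + l, by omega⟩ ⟨i + l + 2, by omega⟩ fun z hz ↦ ?_) (by simp)
  have := hg.le_or_le hz
  have := hg'.le_or_le hz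
  simp only [Nat.dist]
  omega

theorem pathGraph_isPathGap_le_of_initGapSize (hM : IsDistKResolving (pathGraph n) k M)
    {x l : ℕ} (hx : InitGapSize M x) (hx_pos : 1 ≤ x) (hg : IsPathGap M x l) : l ≤ k := by
  by_contra! hl
  have := hg.lt
  refine absurd (hM.pathGraph_eq_of_forall_dist
    ⟨x - 1, by omega⟩ ⟨x + 1, by omega⟩ fun z hz ↦ ?_)
    (by simp only [Fin.mk.injEq]; omega)
  have := hx.le hz
  have := hg.le_or_le hz
  simp only [Nat.dist]
  omega

theorem pathGraph_isPathGap_le_of_termGapSize (hM : IsDistKResolving (pathGraph n) k M)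
    {y j l : ℕ} (hy : TermGapSize M y) (hy_pos : 1 ≤ y) (hg : IsPathGap M j l)
    (hj : j + l + 1 = n - 1 - y) : l ≤ k := by
  by_contra! hl
  have := hy.1
  refine absurd (hM.pathGraph_eq_of_forall_dist
    ⟨j + l, by omega⟩ ⟨j + l + 2, by omega⟩ fun z hz ↦ ?_) (by simp)
  have := hy.le hz
  have := hg.le_or_le hz
  simp only [Nat.dist]
  omega

end IsDistKResolving

theorem stmt14_general (k n : ℕ)
    (M : Finset (Fin n))
    (hres : IsDistKResolving (pathGraph n) k ↑M) :
    ((∀ i l : ℕ, IsPathGap (↑M : Set (Fin n)) i l → l ≤ 2 * k + 1) ∧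
     (∀ x : ℕ, InitGapSize (↑M : Set (Fin n)) x → x ≤ k + 1) ∧
     (∀ y : ℕ, TermGapSize (↑M : Set (Fin n)) y → y ≤ k + 1) ∧
     (∀ i l i' l' : ℕ, IsPathGap (↑M : Set (Fin n)) i l → IsPathGap (↑M : Set (Fin n)) i' l' →
        l = 2 * k + 1 → l' = 2 * k + 1 → i = i') ∧
     ¬ (∃ i l : ℕ, IsPathGap (↑M : Set (Fin n)) i l ∧ l = 2 * k + 1 ∧
        ∃ x y : ℕ, InitGapSize (↑M : Set (Fin n)) x ∧ TermGapSize (↑M : Set (Fin n)) y ∧ x + y = 2 * k + 1)) ∧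
    ((∀ i l : ℕ, IsPathGap (↑M : Set (Fin n)) i l → k + 1 ≤ l →
        ∀ j l' : ℕ, IsPathGap (↑M : Set (Fin n)) j l' →
          (j = i + l + 1 ∨ i = j + l' + 1) → l' ≤ k) ∧
     (∀ x : ℕ, InitGapSize (↑M : Set (Fin n)) x → 1 ≤ x →
        ∀ l' : ℕ, IsPathGap (↑M : Set (Fin n)) x l' → l' ≤ k) ∧
     (∀ y : ℕ, TermGapSize (↑M : Set (Fin n)) y → 1 ≤ y →
        ∀ j l' : ℕ, IsPathGap (↑M : Set (Fin n)) j l' → j + l' + 1 = n - 1 - y → l' ≤ k)) := by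
  refine ⟨⟨fun _ _ ↦ hres.pathGraph_isPathGap_le, fun _ ↦ hres.pathGraph_initGapSize_le,
    fun _ ↦ hres.pathGraph_termGapSize_le, ?_, ?_⟩, ?_,
    fun _ hx hx_pos _ ↦ hres.pathGraph_isPathGap_le_of_initGapSize hx hx_pos,
    fun _ hy hy_pos _ _ ↦ hres.pathGraph_isPathGap_le_of_termGapSize hy hy_pos⟩
  · rintro i l i' l' hg hg' rfl rfl
    exact hres.pathGraph_eq_of_isPathGap_two_mul_add_one hg hg'
  · rintro ⟨i, l, hg, rfl, x, y, hx, hy, hxy⟩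
    exact hres.pathGraph_initGapSize_add_termGapSize_ne hg hx hy hxy
  · rintro i l hg hl j l' hg' (rfl | rfl)
    · have := hres.pathGraph_isPathGap_le_or_le_of_adjacent hg hg'
      omega
    · have := hres.pathGraph_isPathGap_le_or_le_of_adjacent hg' hg
      omega

/-- For a minimum distance-`k` resolving set `M` of `Pₙ` (`n ≥ k+3`):
(a) every gap of `M` has at most `2k+1` vertices, the initial and terminal gaps have at
most `k+1` vertices each, at most one gap has exactly `2k+1` vertices, and it is not
possible both that some gap has `2k+1` vertices and that the union gap has `2k+1`
vertices; (b) a gap with at least `k+1` vertices has all neighboring gaps of at most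
`k` vertices, and a nonempty initial or terminal gap has its neighboring gap of at
most `k` vertices. -/
theorem stmt14 (k n : ℕ) (hk : 1 ≤ k) (hn : k + 3 ≤ n)
    (M : Finset (Fin n))
    (hres : IsDistKResolving (pathGraph n) k ↑M)
    (hmin : ∀ M' : Finset (Fin n),
      IsDistKResolving (pathGraph n) k ↑M' → M.card ≤ M'.card) :
    ((∀ i l : ℕ, IsPathGap (↑M : Set (Fin n)) i l → l ≤ 2 * k + 1) ∧
     (∀ x : ℕ, InitGapSize (↑M : Set (Fin n)) x → x ≤ k + 1) ∧
     (∀ y : ℕ, TermGapSize (↑M : Set (Fin n)) y → y ≤ k + 1) ∧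
     (∀ i l i' l' : ℕ, IsPathGap (↑M : Set (Fin n)) i l → IsPathGap (↑M : Set (Fin n)) i' l' →
        l = 2 * k + 1 → l' = 2 * k + 1 → i = i') ∧
     ¬ (∃ i l : ℕ, IsPathGap (↑M : Set (Fin n)) i l ∧ l = 2 * k + 1 ∧
        ∃ x y : ℕ, InitGapSize (↑M : Set (Fin n)) x ∧ TermGapSize (↑M : Set (Fin n)) y ∧ x + y = 2 * k + 1)) ∧
    ((∀ i l : ℕ, IsPathGap (↑M : Set (Fin n)) i l → k + 1 ≤ l →
        ∀ j l' : ℕ, IsPathGap (↑M : Set (Fin n)) j l' →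
          (j = i + l + 1 ∨ i = j + l' + 1) → l' ≤ k) ∧
     (∀ x : ℕ, InitGapSize (↑M : Set (Fin n)) x → 1 ≤ x →
        ∀ l' : ℕ, IsPathGap (↑M : Set (Fin n)) x l' → l' ≤ k) ∧
     (∀ y : ℕ, TermGapSize (↑M : Set (Fin n)) y → 1 ≤ y →
        ∀ j l' : ℕ, IsPathGap (↑M : Set (Fin n)) j l' → j + l' + 1 = n - 1 - y → l' ≤ k)) :=
  stmt14_general k n M hres
end

section
/- Let $n \ge 2$ and let $k$ be any positive integer. (a) If $n \le k+2$, then $\dim_k(P_n) = 1$. (b) If $k+3 \le n \le 3k+3$, then $\dim_k(P_n) = 2$. (c) If $n \ge 3k+4$, then, writing $r$ for the residue of $n$ modulo $3k+2$ (with $0 \le r \le 3k+1$): $\dim_k(P_n) = \lfloor \tfrac{2n+3k-1}{3k+2} \rfloor$ if $r \in \{0, 1, \ldots, k+2\}$ or $r \in \{\lceil \tfrac{3k+5}{2} \rceil, \ldots, 3k+1\}$, and $\dim_k(P_n) = \lfloor \tfrac{2n+4k-1}{3k+2} \rfloor$ if $r \in \{k+3, \ldots, \lceil \tfrac{3k+5}{2}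 \rceil - 1\}$. -/
open SimpleGraph

namespace PathDim

/-- natural distance -/
def nd (x y : ℕ) : ℕ := (x - y) + (y - x)

/-- uncovered vertices -/
def Unc (k n : ℕ) (S : Finset ℕ) : Finset ℕ :=
  (Finset.range n).filter (fun x => ∀ s ∈ S, k + 1 ≤ nd x s)

/-- local witness condition -/
def C2 (k n : ℕ) (S : Finset ℕ) : Prop :=
  ∀ s ∈ S, s = 0 ∨ s + 1 = n ∨ ∃ t ∈ S, t ≠ s ∧ nd t s ≤ k + 1

def Res (k n : ℕ) (S : Finset ℕ) : Prop :=
  ∀ x < n, ∀ y < n, x ≠ y → ∃ s ∈ S, min (nd x s) (k+1) ≠ min (nd y s) (k+1)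

def Good (k n : ℕ) (S : Finset ℕ) : Prop := (Unc k n S).card ≤ 1 ∧ C2 k n S

lemma res_iff_good (k n : ℕ) (hk : 1 ≤ k) (S : Finset ℕ) (hS : S ⊆ Finset.range n) :
    Res k n S ↔ Good k n S := by
  constructor
  · intro h
    constructor
    · by_contra hU
      push_neg at hU
      obtain ⟨x, hx, y, hy, hxy⟩ := Finset.one_lt_card.mp hU
      simp only [Unc, Finset.mem_filter, Finset.mem_range] at hx hy
      obtain ⟨s, hs, hne⟩ := h x hx.1 y hy.1 hxy
      have h1 := hx.2 s hs
      have h2 := hy.2 s hs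
      simp only [nd] at h1 h2
      apply hne
      simp only [nd]
      omega
    · intro s hs
      have hsn := Finset.mem_range.mp (hS hs)
      by_cases h0 : s = 0
      · exact Or.inl h0
      by_cases h1 : s + 1 = n
      · exact Or.inr (Or.inl h1)
      refine Or.inr (Or.inr ?_)
      obtain ⟨t, ht, hne⟩ := h (s-1) (by omega) (s+1) (by omega) (by omega)
      refine ⟨t, ht, fun hts => hne ?_, ?_⟩
      · simp only [nd, hts]
        omega
      · simp only [nd] at hne ⊢
        omega
  · rintro ⟨hU, hC⟩ x hx y hy hxy
    by_contra hcon
    push_neg at hcon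
    -- every landmark near x or y must be the midpoint
    have key : ∀ s ∈ S, (k + 1 ≤ nd x s ∧ k + 1 ≤ nd y s) ∨ (x + y = 2 * s) := by
      intro s hs
      have := hcon s hs
      simp only [nd] at this ⊢
      omega
    by_cases hmid : ∃ s ∈ S, x + y = 2 * s ∧ nd x s ≤ k
    · obtain ⟨s, hs, hsum, hnear⟩ := hmid
      rcases hC s hs with h0 | h1 | ⟨t, ht, htne, htd⟩
      · simp only [nd] at hnear; omega
      · have hxn : x < n := hx
        have hyn : y < n := hy
        simp only [nd] at hnear; omega
      · -- t is near x or y, and t is not the midpoint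
        rcases key t ht with ⟨ha, hb⟩ | hmid'
        · simp only [nd] at ha hb htd hnear
          omega
        · simp only [nd] at htd hnear
          omega
    · -- both x and y uncovered
      push_neg at hmid
      have hxU : x ∈ Unc k n S := by
        simp only [Unc, Finset.mem_filter, Finset.mem_range]
        refine ⟨hx, fun s hs => ?_⟩
        rcases key s hs with ⟨ha, _⟩ | hm
        · exact ha
        · have := hmid s hs hm
          simp only [nd] at this ⊢
          omega
      have hyU : y ∈ Unc k n S := by
        simp only [Unc, Finset.mem_filter, Finset.mem_range]
        refine ⟨hy, fun s hs => ?_⟩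
        rcases key s hs with ⟨_, hb⟩ | hm
        · exact hb
        · have := hmid s hs hm
          simp only [nd] at this ⊢
          omega
      have : 1 < (Unc k n S).card := Finset.one_lt_card.mpr ⟨x, hxU, y, hyU, hxy⟩
      omega










/-- tail counting: shrinking the path to end at the max landmark -/
lemma unc_tail (k n M : ℕ) (S : Finset ℕ) (hub : ∀ s ∈ S, s ≤ M) (hMn : M < n) :
    (Unc k (M+1) S).card + (n - (M+k+1)) ≤ (Unc k n S).card := by
  have hsub : Unc k (M+1) S ∪ Finset.Ico (M+k+1) n ⊆ Unc k n S := by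
    intro x hx
    rcases Finset.mem_union.mp hx with hx | hx
    · simp only [Unc, Finset.mem_filter, Finset.mem_range] at hx ⊢
      exact ⟨by omega, hx.2⟩
    · simp only [Finset.mem_Ico] at hx
      simp only [Unc, Finset.mem_filter, Finset.mem_range]
      refine ⟨hx.2, fun s hs => ?_⟩
      have := hub s hs
      simp only [nd]
      omega
  have hdisj : Disjoint (Unc k (M+1) S) (Finset.Ico (M+k+1) n) := by
    rw [Finset.disjoint_left]
    intro x hx hx'
    simp only [Unc, Finset.mem_filter, Finset.mem_range] at hx
    simp only [Finset.mem_Ico] at hx'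
    omega
  calc (Unc k (M+1) S).card + (n - (M+k+1))
      = (Unc k (M+1) S).card + (Finset.Ico (M+k+1) n).card := by rw [Nat.card_Ico]
    _ = (Unc k (M+1) S ∪ Finset.Ico (M+k+1) n).card := (Finset.card_union_of_disjoint hdisj).symm
    _ ≤ (Unc k n S).card := Finset.card_le_card hsub

/-- gap counting: removing the max landmark and shrinking to the second max -/
lemma unc_split (k M M' : ℕ) (S : Finset ℕ) (hM : M ∈ S) (hub : ∀ s ∈ S, s ≤ M)
    (hM' : M' ∈ S.erase M) (hub' : ∀ s ∈ S.erase M, s ≤ M') :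
    (Unc k (M'+1) (S.erase M)).card + (M - k - (M'+k+1)) ≤ (Unc k (M+1) S).card := by
  have hM'M : M' < M := by
    have := Finset.mem_erase.mp hM'
    have := hub M' this.2
    omega
  have hsub : Unc k (M'+1) (S.erase M) ∪ Finset.Ico (M'+k+1) (M-k) ⊆ Unc k (M+1) S := by
    intro x hx
    rcases Finset.mem_union.mp hx with hx | hx
    · simp only [Unc, Finset.mem_filter, Finset.mem_range] at hx ⊢
      refine ⟨by omega, fun s hs => ?_⟩
      by_cases hsM : s = M
      · subst hsM
        have h1 := hx.2 M' hM'
        simp only [nd] at h1 ⊢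
        omega
      · exact hx.2 s (Finset.mem_erase.mpr ⟨hsM, hs⟩)
    · simp only [Finset.mem_Ico] at hx
      simp only [Unc, Finset.mem_filter, Finset.mem_range]
      refine ⟨by omega, fun s hs => ?_⟩
      by_cases hsM : s = M
      · subst hsM; simp only [nd]; omega
      · have := hub' s (Finset.mem_erase.mpr ⟨hsM, hs⟩)
        simp only [nd]
        omega
  have hdisj : Disjoint (Unc k (M'+1) (S.erase M)) (Finset.Ico (M'+k+1) (M-k)) := by
    rw [Finset.disjoint_left]
    intro x hx hx'
    simp only [Unc, Finset.mem_filter, Finset.mem_range] at hx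
    simp only [Finset.mem_Ico] at hx'
    omega
  calc (Unc k (M'+1) (S.erase M)).card + (M - k - (M'+k+1))
      = (Unc k (M'+1) (S.erase M)).card + (Finset.Ico (M'+k+1) (M-k)).card := by
        rw [Nat.card_Ico]
    _ = _ := (Finset.card_union_of_disjoint hdisj).symm
    _ ≤ _ := Finset.card_le_card hsub

lemma C2_shrink_tail (k n M : ℕ) (S : Finset ℕ) (h : C2 k n S) (hub : ∀ s ∈ S, s ≤ M)
    (hMn : M < n) : C2 k (M+1) S := by
  intro s hs
  rcases h s hs with h0 | h1 | hw
  · exact Or.inl h0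
  · have := hub s hs
    exact Or.inr (Or.inl (by omega))
  · exact Or.inr (Or.inr hw)

lemma C2_erase_max (k n M M' : ℕ) (S : Finset ℕ) (h : C2 k n S) (hM : M ∈ S)
    (hub : ∀ s ∈ S, s ≤ M)
    (hMn : M + 1 = n) (hM' : M' ∈ S.erase M) (hub' : ∀ s ∈ S.erase M, s ≤ M') :
    C2 k (M'+1) (S.erase M) := by
  intro s hs
  have hsM' := hub' s hs
  have hsM : s ≠ M := (Finset.mem_erase.mp hs).1
  have hsS : s ∈ S := (Finset.mem_erase.mp hs).2
  have hM'M : M' < M := by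
    have h1 := Finset.mem_erase.mp hM'
    have := hub M' h1.2
    omega
  rcases h s hsS with h0 | h1 | ⟨t, ht, htne, htd⟩
  · exact Or.inl h0
  · exact absurd (by omega : s = M) hsM
  · by_cases htM : t = M
    · subst htM
      by_cases hsM'' : s = M'
      · exact Or.inr (Or.inl (by omega))
      · refine Or.inr (Or.inr ⟨M', hM', by omega, ?_⟩)
        simp only [nd] at htd ⊢
        omega
    · exact Or.inr (Or.inr ⟨t, Finset.mem_erase.mpr ⟨htM, ht⟩, htne, htd⟩)

lemma lb_main (k : ℕ) (hk : 1 ≤ k) : ∀ m σ n (S : Finset ℕ), S ⊆ Finset.range n →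
    S.card = m → (Unc k n S).card ≤ σ → C2 k n S →
    ((∃ M ∈ S, M + 1 = n) →
      2*n + k*(m % 2) + 2*k*(1 - m % 2) ≤ m*(3*k+2) + 2*σ) ∧
    ((∃ M ∈ S, M + 1 = n ∧ ∃ t ∈ S, t ≠ M ∧ M ≤ t + (k+1)) →
      2*n + k*(m % 2) + 2*k ≤ m*(3*k+2) + 2*σ) := by
  intro m
  induction m with
  | zero =>
    intro σ n S hsub hcard hU hC
    rw [Finset.card_eq_zero] at hcard
    subst hcard
    constructor
    · rintro ⟨M, hM, -⟩; exact absurd hM (Finset.notMem_empty M)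
    · rintro ⟨M, hM, -⟩; exact absurd hM (Finset.notMem_empty M)
  | succ m ih =>
    intro σ n S hsub hcard hU hC
    have hub : ∀ M ∈ S, ∀ s ∈ S, M + 1 = n → s ≤ M := by
      intro M hM s hs hMn
      have := Finset.mem_range.mp (hsub hs)
      omega
    have hEnd : (∃ M ∈ S, M + 1 = n) →
        2*n + k*((m+1) % 2) + 2*k*(1 - (m+1) % 2) ≤ (m+1)*(3*k+2) + 2*σ := by
      rintro ⟨M, hM, hMn⟩
      have hubM : ∀ s ∈ S, s ≤ M := fun s hs => hub M hM s hs hMn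
      have hcard' : (S.erase M).card = m := by
        rw [Finset.card_erase_of_mem hM, hcard]
        omega
      rcases Nat.eq_zero_or_pos m with hm0 | hmpos
      · -- S = {M}
        subst hm0
        have hSM : S = {M} := by
          apply Finset.eq_singleton_iff_unique_mem.mpr
          refine ⟨hM, fun x hx => ?_⟩
          by_contra hxe
          have : x ∈ S.erase M := Finset.mem_erase.mpr ⟨hxe, hx⟩
          rw [Finset.card_eq_zero] at hcard'
          simp [hcard'] at this
        have hUsub : Finset.range (M - k) ⊆ Unc k n S := by
          intro x hx
          simp only [Finset.mem_range] at hx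
          simp only [Unc, Finset.mem_filter, Finset.mem_range]
          refine ⟨by omega, fun s hs => ?_⟩
          rw [hSM, Finset.mem_singleton] at hs
          subst hs
          simp only [nd]; omega
        have hcnt : M - k ≤ σ := by
          calc M - k = (Finset.range (M - k)).card := (Finset.card_range _).symm
            _ ≤ (Unc k n S).card := Finset.card_le_card hUsub
            _ ≤ σ := hU
        norm_num
        omega
      · -- m ≥ 1 : peel M
        have hne' : (S.erase M).Nonempty := Finset.card_pos.mp (by omega)
        set M' := (S.erase M).max' hne' with hM'def
        have hM'S' : M' ∈ S.erase M := Finset.max'_mem _ hne'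
        have hub' : ∀ s ∈ S.erase M, s ≤ M' := fun s hs => Finset.le_max' _ s hs
        have hM'M : M' < M := by
          have h1 := Finset.mem_erase.mp hM'S'
          have := hubM M' h1.2
          omega
        have hcnt := unc_split k M M' S hM hubM hM'S' hub'
        have hUn : Unc k (M+1) S = Unc k n S := by rw [hMn]
        rw [hUn] at hcnt
        have hC' := C2_erase_max k n M M' S hC hM hubM hMn hM'S' hub'
        have hsub' : S.erase M ⊆ Finset.range (M'+1) := by
          intro s hs
          exact Finset.mem_range.mpr (by have := hub' s hs; omega)
        set u := M - k - (M'+k+1) with hu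
        have hUle : (Unc k (M'+1) (S.erase M)).card ≤ σ - u := by omega
        obtain ⟨ih1, ih2⟩ := ih (σ - u) (M'+1) (S.erase M) hsub' hcard' hUle hC'
        have hprod : (m+1)*(3*k+2) = m*(3*k+2) + (3*k+2) := by ring
        by_cases hg : M ≤ M' + (k+1)
        · have hb := ih1 ⟨M', hM'S', rfl⟩
          have hu0 : u = 0 := by omega
          rcases Nat.mod_two_eq_zero_or_one m with hp | hp <;>
            · have hp1 : (m+1) % 2 = 1 - m % 2 := by omega
              rw [hp] at hb
              rw [hp1, hp, hprod] at *
              generalize m*(3*k+2) = A at *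
              simp only [Nat.mul_zero, Nat.mul_one, Nat.sub_zero, Nat.sub_self] at *
              omega
        · -- big gap
          have hB : 2*(M'+1) + k*(m % 2) + 2*k ≤ m*(3*k+2) + 2*(σ - u) := by
            rcases hC M' (Finset.mem_erase.mp hM'S').2 with h0 | h1 | ⟨t, htS, htne, htd⟩
            · -- M' = 0, so m = 1
              have hm1 : m = 1 := by
                have hss : S.erase M ⊆ {0} := by
                  intro s hs
                  have := hub' s hs
                  simp only [Finset.mem_singleton]
                  omega
                have := Finset.card_le_card hss
                simp only [Finset.card_singleton] at this
                omega
              subst hm1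
              norm_num
              omega
            · omega
            · -- witness for M' within k+1 ⇒ EndSmall at m
              have htM : t ≠ M := by
                rintro rfl
                simp only [nd] at htd
                have := hubM M' ((Finset.mem_erase.mp hM'S').2)
                omega
              have htS' : t ∈ S.erase M := Finset.mem_erase.mpr ⟨htM, htS⟩
              have htle : t ≤ M' := hub' t htS'
              apply ih2
              refine ⟨M', hM'S', rfl, t, htS', htne, ?_⟩
              simp only [nd] at htd
              omega
          have hgap : M - M' ≤ 2*k+1 + u := by omega
          have huσ : u ≤ σ := by omega
          rcases Nat.mod_two_eq_zero_or_one m with hp | hp <;>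
            · have hp1 : (m+1) % 2 = 1 - m % 2 := by omega
              rw [hp] at hB
              rw [hp1, hp, hprod] at *
              generalize m*(3*k+2) = A at *
              simp only [Nat.mul_zero, Nat.mul_one, Nat.sub_zero, Nat.sub_self] at *
              omega
    refine ⟨hEnd, ?_⟩
    rintro ⟨M, hM, hMn, t, htS, htne, htw⟩
    have hubM : ∀ s ∈ S, s ≤ M := fun s hs => hub M hM s hs hMn
    have hcard' : (S.erase M).card = m := by
      rw [Finset.card_erase_of_mem hM, hcard]
      omega
    have htS' : t ∈ S.erase M := Finset.mem_erase.mpr ⟨htne, htS⟩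
    have hne' : (S.erase M).Nonempty := ⟨t, htS'⟩
    set M' := (S.erase M).max' hne' with hM'def
    have hM'S' : M' ∈ S.erase M := Finset.max'_mem _ hne'
    have hub' : ∀ s ∈ S.erase M, s ≤ M' := fun s hs => Finset.le_max' _ s hs
    have hM'M : M' < M := by
      have h1 := Finset.mem_erase.mp hM'S'
      have := hubM M' h1.2
      omega
    have htM' : t ≤ M' := hub' t htS'
    have hgap : M ≤ M' + (k+1) := by omega
    have hcnt := unc_split k M M' S hM hubM hM'S' hub'
    have hUn : Unc k (M+1) S = Unc k n S := by rw [hMn]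
    rw [hUn] at hcnt
    have hC' := C2_erase_max k n M M' S hC hM hubM hMn hM'S' hub'
    have hsub' : S.erase M ⊆ Finset.range (M'+1) := by
      intro s hs
      exact Finset.mem_range.mpr (by have := hub' s hs; omega)
    have hUle : (Unc k (M'+1) (S.erase M)).card ≤ σ := by omega
    obtain ⟨ih1, _⟩ := ih σ (M'+1) (S.erase M) hsub' hcard' hUle hC'
    have hb := ih1 ⟨M', hM'S', rfl⟩
    have hprod : (m+1)*(3*k+2) = m*(3*k+2) + (3*k+2) := by ring
    rcases Nat.mod_two_eq_zero_or_one m with hp | hp <;>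
      · have hp1 : (m+1) % 2 = 1 - m % 2 := by omega
        rw [hp] at hb
        rw [hp1, hp, hprod] at *
        generalize m*(3*k+2) = A at *
        simp only [Nat.mul_zero, Nat.mul_one, Nat.sub_zero, Nat.sub_self] at *
        omega

lemma lb_free (k : ℕ) (hk : 1 ≤ k) (n σ : ℕ) (S : Finset ℕ) (hsub : S ⊆ Finset.range n)
    (hU : (Unc k n S).card ≤ σ) (hC : C2 k n S) :
    2*n + k*(S.card % 2) ≤ S.card*(3*k+2) + 2*σ := by
  rcases S.eq_empty_or_nonempty with rfl | hne
  · have hUe : Unc k n (∅ : Finset ℕ) = Finset.range n := by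
      apply Finset.filter_true_of_mem
      intro x _
      intro s hs
      exact absurd hs (Finset.notMem_empty s)
    rw [hUe, Finset.card_range] at hU
    simp only [Finset.card_empty]
    omega
  · set M := S.max' hne with hMdef
    have hMS : M ∈ S := Finset.max'_mem _ hne
    have hub : ∀ s ∈ S, s ≤ M := fun s hs => Finset.le_max' _ s hs
    have hMn : M < n := Finset.mem_range.mp (hsub hMS)
    by_cases hend : M + 1 = n
    · have hb := (lb_main k hk S.card σ n S hsub rfl hU hC).1 ⟨M, hMS, hend⟩
      rcases Nat.mod_two_eq_zero_or_one S.card with hp | hp <;>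
        · rw [hp] at hb ⊢
          generalize S.card*(3*k+2) = A at *
          simp only [Nat.mul_zero, Nat.mul_one, Nat.sub_zero, Nat.sub_self] at *
          omega
    · -- M + 1 < n : shrink the tail
      set e := n - (M+k+1) with he
      have hUt := unc_tail k n M S hub hMn
      have hC2' := C2_shrink_tail k n M S hC hub hMn
      have hsub' : S ⊆ Finset.range (M+1) :=
        fun s hs => Finset.mem_range.mpr (by have := hub s hs; omega)
      rcases hC M hMS with h0 | h1 | ⟨t, htS, htne, htd⟩
      · -- M = 0 : S = {0}
        have hS0 : S = {0} := by
          apply Finset.eq_singleton_iff_unique_mem.mpr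
          refine ⟨h0 ▸ hMS, fun x hx => by have := hub x hx; omega⟩
        have hUsub : Finset.Ico (k+1) n ⊆ Unc k n S := by
          intro x hx
          simp only [Finset.mem_Ico] at hx
          simp only [Unc, Finset.mem_filter, Finset.mem_range]
          refine ⟨by omega, fun s hs => ?_⟩
          rw [hS0, Finset.mem_singleton] at hs
          subst hs
          simp only [nd]; omega
        have hcnt : n - (k+1) ≤ σ := by
          calc n - (k+1) = (Finset.Ico (k+1) n).card := by rw [Nat.card_Ico]
            _ ≤ (Unc k n S).card := Finset.card_le_card hUsub
            _ ≤ σ := hU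
        rw [hS0]
        simp only [Finset.card_singleton]
        omega
      · omega
      · -- EndSmall at (M+1, S, σ - e)
        have htM : t ≤ M := hub t htS
        have hUle : (Unc k (M+1) S).card ≤ σ - e := by omega
        have hb := (lb_main k hk S.card (σ - e) (M+1) S hsub' rfl hUle hC2').2
          ⟨M, hMS, rfl, t, htS, htne, by simp only [nd] at htd; omega⟩
        have heσ : e ≤ σ := by omega
        rcases Nat.mod_two_eq_zero_or_one S.card with hp | hp <;>
          · rw [hp] at hb ⊢
            generalize S.card*(3*k+2) = A at *
            omega

def F (k m : ℕ) : ℕ := (m/2)*(3*k+2) + 1 + (m % 2)*(k+1)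

lemma F_even (k t : ℕ) : F k (2*t) = t*(3*k+2)+1 := by
  have h1 : 2*t/2 = t := by omega
  have h2 : 2*t % 2 = 0 := by omega
  simp [F, h1, h2]

lemma F_odd (k t : ℕ) : F k (2*t+1) = t*(3*k+2)+(k+2) := by
  have h1 : (2*t+1)/2 = t := by omega
  have h2 : (2*t+1) % 2 = 1 := by omega
  simp only [F, h1, h2]
  ring

lemma F_step (k m : ℕ) : F k (m+2) = F k m + (3*k+2) := by
  have h1 : (m+2)/2 = m/2 + 1 := by omega
  have h2 : (m+2) % 2 = m % 2 := by omega
  simp only [F, h1, h2]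
  ring

lemma F_mono (k : ℕ) : Monotone (F k) := by
  apply monotone_nat_of_le_succ
  intro m
  rcases Nat.even_or_odd m with ⟨t, rfl⟩ | ⟨t, rfl⟩
  · have ht : t + t = 2*t := by ring
    rw [ht, F_even]
    have : 2*t+1 = 2*t+1 := rfl
    rw [F_odd]
    omega
  · rw [F_odd]
    have h : 2*t+1+1 = 2*(t+1) := by ring
    rw [h, F_even]
    have : (t+1)*(3*k+2) = t*(3*k+2) + (3*k+2) := by ring
    omega

lemma F_ge (k m : ℕ) : m + 1 ≤ F k m := by
  rcases Nat.even_or_odd m with ⟨t, rfl⟩ | ⟨t, rfl⟩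
  · have ht : t + t = 2*t := by ring
    rw [ht, F_even]
    have : t*2 ≤ t*(3*k+2) := Nat.mul_le_mul_left _ (by omega)
    omega
  · rw [F_odd]
    have : t*2 ≤ t*(3*k+2) := Nat.mul_le_mul_left _ (by omega)
    omega

lemma lb_F (k : ℕ) (hk : 1 ≤ k) (n : ℕ) (S : Finset ℕ) (hsub : S ⊆ Finset.range n)
    (hres : Res k n S) : n ≤ F k S.card := by
  obtain ⟨hU, hC⟩ := (res_iff_good k n hk S hsub).mp hres
  have hb := lb_free k hk n 1 S hsub hU hC
  rcases Nat.even_or_odd S.card with ⟨t, ht⟩ | ⟨t, ht⟩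
  · have ht2 : S.card = 2*t := by omega
    rw [ht2] at hb ⊢
    rw [F_even]
    have he : (2*t)*(3*k+2) = 2*(t*(3*k+2)) := by ring
    rw [he] at hb
    have h2 : (2*t) % 2 = 0 := by omega
    rw [h2] at hb
    omega
  · rw [ht] at hb ⊢
    rw [F_odd]
    have he : (2*t+1)*(3*k+2) = 2*(t*(3*k+2)) + 3*k+2 := by ring
    rw [he] at hb
    have h2 : (2*t+1) % 2 = 1 := by omega
    rw [h2] at hb
    omega

lemma good_empty (k n : ℕ) (hn : n ≤ 1) : Good k n (∅ : Finset ℕ) := by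
  constructor
  · have : Unc k n ∅ ⊆ Finset.range n := Finset.filter_subset _ _
    have := Finset.card_le_card this
    rw [Finset.card_range] at this
    omega
  · intro s hs
    exact absurd hs (Finset.notMem_empty s)

lemma good_single (k n : ℕ) (hn : n ≤ k+2) : Good k n ({0} : Finset ℕ) := by
  constructor
  · have hsub : Unc k n {0} ⊆ {k+1} := by
      intro x hx
      simp only [Unc, Finset.mem_filter, Finset.mem_range] at hx
      have := hx.2 0 (Finset.mem_singleton_self 0)
      simp only [nd] at this
      simp only [Finset.mem_singleton]
      omega
    have := Finset.card_le_card hsub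
    simpa using this
  · intro s hs
    rw [Finset.mem_singleton] at hs
    exact Or.inl hs

lemma good_pair (k n : ℕ) (hk : 1 ≤ k) (hn1 : k+3 ≤ n) (hn2 : n ≤ 3*k+3) :
    ({n-(2*k+2), n-(k+1)} : Finset ℕ) ⊆ Finset.range n ∧
    Good k n {n-(2*k+2), n-(k+1)} ∧ ({n-(2*k+2), n-(k+1)} : Finset ℕ).card ≤ 2 := by
  set a := n-(2*k+2) with ha
  set b := n-(k+1) with hb
  refine ⟨?_, ⟨?_, ?_⟩, ?_⟩
  · intro x hx
    simp only [Finset.mem_insert, Finset.mem_singleton] at hx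
    rcases hx with rfl | rfl <;> exact Finset.mem_range.mpr (by omega)
  · have hsub : Unc k n {a, b} ⊆ {0} := by
      intro x hx
      simp only [Unc, Finset.mem_filter, Finset.mem_range] at hx
      have h1 := hx.2 a (by simp)
      have h2 := hx.2 b (by simp)
      simp only [nd] at h1 h2
      simp only [Finset.mem_singleton]
      omega
    have := Finset.card_le_card hsub
    simpa using this
  · intro s hs
    simp only [Finset.mem_insert, Finset.mem_singleton] at hs
    rcases hs with rfl | rfl
    · by_cases h0 : a = 0
      · exact Or.inl h0
      · refine Or.inr (Or.inr ⟨b, by simp, by omega, ?_⟩)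
        simp only [nd]
        omega
    · refine Or.inr (Or.inr ⟨a, by simp, by omega, ?_⟩)
      simp only [nd]
      omega
  · apply le_trans (Finset.card_insert_le _ _)
    simp

lemma good_ext (k n' : ℕ) (hk : 1 ≤ k) (S' : Finset ℕ) (hsub' : S' ⊆ Finset.range n')
    (hg : Good k n' S') (hn' : 2 ≤ n') :
    (insert (n'+k) (insert (n'+2*k+1) S') ⊆ Finset.range (n'+(3*k+2))) ∧
    Good k (n'+(3*k+2)) (insert (n'+k) (insert (n'+2*k+1) S')) ∧
    (insert (n'+k) (insert (n'+2*k+1) S')).card ≤ S'.card + 2 := by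
  set a := n'+k with ha
  set b := n'+2*k+1 with hb
  set n := n'+(3*k+2) with hn
  set S := insert a (insert b S') with hS
  obtain ⟨hU', hC'⟩ := hg
  refine ⟨?_, ⟨?_, ?_⟩, ?_⟩
  · intro x hx
    simp only [hS, Finset.mem_insert] at hx
    rcases hx with rfl | rfl | hx
    · exact Finset.mem_range.mpr (by omega)
    · exact Finset.mem_range.mpr (by omega)
    · have := Finset.mem_range.mp (hsub' hx)
      exact Finset.mem_range.mpr (by omega)
  · have hsub : Unc k n S ⊆ Unc k n' S' := by
      intro x hx
      simp only [Unc, Finset.mem_filter, Finset.mem_range] at hx ⊢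
      have h1 := hx.2 a (by simp [hS])
      have h2 := hx.2 b (by simp [hS])
      simp only [nd] at h1 h2
      refine ⟨by omega, fun s hs => hx.2 s (by simp [hS, hs])⟩
    have := Finset.card_le_card hsub
    omega
  · intro s hs
    simp only [hS, Finset.mem_insert] at hs
    rcases hs with rfl | rfl | hs
    · refine Or.inr (Or.inr ⟨b, by simp [hS], by omega, ?_⟩)
      simp only [nd]; omega
    · refine Or.inr (Or.inr ⟨a, by simp [hS], by omega, ?_⟩)
      simp only [nd]; omega
    · rcases hC' s hs with h0 | h1 | ⟨t, htS', htne, htd⟩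
      · exact Or.inl h0
      · have hslt : s < n' := Finset.mem_range.mp (hsub' hs)
        refine Or.inr (Or.inr ⟨a, by simp [hS], by omega, ?_⟩)
        simp only [nd]; omega
      · exact Or.inr (Or.inr ⟨t, by simp [hS, htS'], htne, htd⟩)
  · apply le_trans (Finset.card_insert_le _ _)
    have := Finset.card_insert_le b S'
    omega

lemma exists_good (k : ℕ) (hk : 1 ≤ k) :
    ∀ m n, n ≤ F k m → ∃ S : Finset ℕ, S ⊆ Finset.range n ∧ Good k n S ∧ S.card ≤ m := by
  intro m
  induction m using Nat.twoStepInduction with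
  | zero =>
    intro n hn
    simp only [F] at hn
    norm_num at hn
    exact ⟨∅, by simp, good_empty k n hn, by simp⟩
  | one =>
    intro n hn
    have hF1 : F k 1 = k+2 := by simp [F]; omega
    rw [hF1] at hn
    rcases Nat.eq_zero_or_pos n with rfl | hpos
    · exact ⟨∅, by simp, good_empty k 0 (by omega), by simp⟩
    · refine ⟨{0}, ?_, good_single k n hn, by simp⟩
      intro x hx
      simp only [Finset.mem_singleton] at hx
      subst hx
      exact Finset.mem_range.mpr hpos
  | more m ihm ihm1 =>
    intro n hn
    by_cases hcase : n ≤ F k (m+1)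
    · obtain ⟨S, h1, h2, h3⟩ := ihm1 n hcase
      exact ⟨S, h1, h2, by omega⟩
    · push_neg at hcase
      have hge : k + 3 ≤ n := by
        have h1 : F k 1 ≤ F k (m+1) := F_mono k (by omega)
        have h2 : F k 1 = k+2 := by simp [F]; omega
        omega
      by_cases hsmall : n ≤ 3*k+3
      · obtain ⟨h1, h2, h3⟩ := good_pair k n hk hge hsmall
        exact ⟨_, h1, h2, by omega⟩
      · push_neg at hsmall
        set n' := n - (3*k+2) with hn'
        have hn'2 : 2 ≤ n' := by omega
        have hn'F : n' ≤ F k m := by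
          have := F_step k m
          omega
        obtain ⟨S', hsub', hg', hcard'⟩ := ihm n' hn'F
        obtain ⟨h1, h2, h3⟩ := good_ext k n' hk S' hsub' hg' hn'2
        have hnn : n' + (3*k+2) = n := by omega
        rw [hnn] at h1 h2
        exact ⟨_, h1, h2, by omega⟩

lemma res_mono (k n : ℕ) (S T : Finset ℕ) (hST : S ⊆ T) (h : Res k n S) : Res k n T := by
  intro x hx y hy hxy
  obtain ⟨s, hs, hne⟩ := h x hx y hy hxy
  exact ⟨s, hST hs, hne⟩

lemma res_min (k : ℕ) (hk : 1 ≤ k) (n T : ℕ) (hT : 1 ≤ T)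
    (h1 : F k (T-1) < n) (h2 : n ≤ F k T) :
    sInf {m | ∃ S : Finset ℕ, S ⊆ Finset.range n ∧ Res k n S ∧ S.card = m} = T := by
  have hmemT : T ∈ {m | ∃ S : Finset ℕ, S ⊆ Finset.range n ∧ Res k n S ∧ S.card = m} := by
    obtain ⟨S0, hsub0, hg0, hcard0⟩ := exists_good k hk T n h2
    have hTn : T ≤ n := by
      have := F_ge k (T-1)
      omega
    obtain ⟨S1, hs01, hs1r, hcard1⟩ :=
      Finset.exists_subsuperset_card_eq hsub0 hcard0 (by rwa [Finset.card_range])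
    exact ⟨S1, hs1r, res_mono k n S0 S1 hs01 ((res_iff_good k n hk S0 hsub0).mpr hg0), hcard1⟩
  have hlow : ∀ m ∈ {m | ∃ S : Finset ℕ, S ⊆ Finset.range n ∧ Res k n S ∧ S.card = m}, T ≤ m := by
    rintro m ⟨S, hsub, hres, rfl⟩
    by_contra hlt
    push_neg at hlt
    have := lb_F k hk n S hsub hres
    have hm : F k S.card ≤ F k (T-1) := F_mono k (by omega)
    omega
  exact le_antisymm (Nat.sInf_le hmemT) (hlow _ (Nat.sInf_mem ⟨T, hmemT⟩))

open SimpleGraph in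
lemma path_edist_le (n : ℕ) : ∀ (d : ℕ) (u v : Fin n), u.val + d = v.val →
    (pathGraph n).edist u v ≤ d := by
  intro d
  induction d with
  | zero =>
    intro u v h
    have : u = v := Fin.ext (by omega)
    subst this
    simp [edist_self]
  | succ d ihd =>
    intro u v h
    have hu1 : u.val + 1 < n := by have := v.isLt; omega
    set w : Fin n := ⟨u.val+1, hu1⟩ with hw
    have hadj : (pathGraph n).Adj u w := pathGraph_adj.mpr (Or.inl rfl)
    calc (pathGraph n).edist u v ≤ (pathGraph n).edist u w + (pathGraph n).edist w v :=
          SimpleGraph.edist_triangle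
      _ ≤ 1 + (d : ℕ∞) := by
          apply add_le_add
          · exact le_of_eq (edist_eq_one_iff_adj.mpr hadj)
          · exact ihd w v (by simp [hw]; omega)
      _ = ((d+1 : ℕ) : ℕ∞) := by push_cast; ring

open SimpleGraph in
lemma path_walk_ge (n : ℕ) (u v : Fin n) (p : (pathGraph n).Walk u v) :
    nd u.val v.val ≤ p.length := by
  induction p with
  | nil => simp [nd]
  | @cons a b c h p ih =>
    have hab := pathGraph_adj.mp h
    rw [SimpleGraph.Walk.length_cons]
    simp only [nd] at ih ⊢
    omega

open SimpleGraph in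
lemma path_edist_eq (n : ℕ) (hn : 1 ≤ n) (u v : Fin n) :
    (pathGraph n).edist u v = (nd u.val v.val : ℕ∞) := by
  apply le_antisymm
  · rcases le_total u.val v.val with h | h
    · have := path_edist_le n (v.val - u.val) u v (by omega)
      have hnd : nd u.val v.val = v.val - u.val := by simp [nd]; omega
      rw [hnd]
      exact this
    · have := path_edist_le n (u.val - v.val) v u (by omega)
      have hnd : nd u.val v.val = u.val - v.val := by simp [nd]; omega
      rw [hnd, SimpleGraph.edist_comm]
      exact this
  · obtain ⟨m, rfl⟩ : ∃ m, n = m+1 := ⟨n-1, by omega⟩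
    obtain ⟨p, hp⟩ := (pathGraph_connected m).exists_walk_length_eq_edist u v
    rw [← hp]
    exact_mod_cast path_walk_ge (m+1) u v p

lemma quot_eq (q c x j : ℕ) (hq : 0 < q) (hx1 : j*q ≤ x) (hx2 : x < (j+1)*q) :
    (q*c + x)/q = c + j := by
  rw [Nat.mul_add_div hq, Nat.div_eq_of_lt_le hx1 hx2]

lemma quot0 (q c x : ℕ) (hq : 0 < q) (hx : x < q) : (q*c+x)/q = c := by
  rw [Nat.mul_add_div hq, Nat.div_eq_of_lt hx, Nat.add_zero]

lemma quot1 (q c x : ℕ) (hq : 0 < q) (h1 : q ≤ x) (h2 : x < 2*q) : (q*c+x)/q = c+1 := by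
  have hd : x / q = 1 := Nat.div_eq_of_lt_le (by omega) (by omega)
  rw [Nat.mul_add_div hq, hd]

lemma quot2 (q c x : ℕ) (hq : 0 < q) (h1 : 2*q ≤ x) (h2 : x < 3*q) : (q*c+x)/q = c+2 := by
  have hd : x / q = 2 := Nat.div_eq_of_lt_le (by omega) (by omega)
  rw [Nat.mul_add_div hq, hd]

end PathDim

lemma distK_path (n k : ℕ) (hn : 1 ≤ n) (u v : Fin n) :
    distK (pathGraph n) k u v = ((min (PathDim.nd u.val v.val) (k+1) : ℕ) : ℕ∞) := by
  unfold distK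
  rw [PathDim.path_edist_eq n hn]
  have hc : ((k : ℕ∞) + 1) = ((k+1 : ℕ) : ℕ∞) := by push_cast; ring
  rw [hc]
  rcases le_total (PathDim.nd u.val v.val) (k+1) with h | h
  · rw [min_eq_left (by exact_mod_cast h), min_eq_left h]
  · rw [min_eq_right (by exact_mod_cast h), min_eq_right h]

lemma sets_eq (n k : ℕ) (hn : 1 ≤ n) :
    {m | ∃ S : Finset (Fin n), IsDistKResolving (pathGraph n) k ↑S ∧ S.card = m} =
    {m | ∃ S : Finset ℕ, S ⊆ Finset.range n ∧ PathDim.Res k n S ∧ S.card = m} := by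
  ext m
  simp only [Set.mem_setOf_eq]
  constructor
  · rintro ⟨S, hres, rfl⟩
    refine ⟨S.image Fin.val, ?_, ?_, Finset.card_image_of_injective S Fin.val_injective⟩
    · intro x hx
      obtain ⟨u, _, rfl⟩ := Finset.mem_image.mp hx
      exact Finset.mem_range.mpr u.isLt
    · intro x hx y hy hxy
      obtain ⟨z, hz, hne⟩ := hres ⟨x, hx⟩ ⟨y, hy⟩ (by simp [Fin.ext_iff]; exact hxy)
      rw [distK_path n k hn, distK_path n k hn] at hne
      refine ⟨z.val, Finset.mem_image_of_mem _ (Finset.mem_coe.mp hz), fun heq => hne ?_⟩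
      exact_mod_cast heq
  · rintro ⟨T, hsub, hres, rfl⟩
    have hlt : ∀ m ∈ T, m < n := fun m hm => Finset.mem_range.mp (hsub hm)
    refine ⟨T.attachFin hlt, ?_, Finset.card_attachFin T hlt⟩
    intro x y hxy
    obtain ⟨s, hsT, hne⟩ := hres x.val x.isLt y.val y.isLt (fun h => hxy (Fin.ext h))
    refine ⟨⟨s, hlt s hsT⟩, Finset.mem_coe.mpr ((Finset.mem_attachFin hlt).mpr hsT), ?_⟩
    rw [distK_path n k hn, distK_path n k hn]
    exact fun heq => hne (by exact_mod_cast heq)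

lemma dim_path (n k T : ℕ) (hk : 1 ≤ k) (hn : 1 ≤ n) (hT : 1 ≤ T)
    (h1 : PathDim.F k (T-1) < n) (h2 : n ≤ PathDim.F k T) :
    dimK (pathGraph n) k = T := by
  have hd : dimK (pathGraph n) k =
      sInf {m | ∃ S : Finset (Fin n), IsDistKResolving (pathGraph n) k ↑S ∧ S.card = m} := rfl
  rw [hd, sets_eq n k hn, PathDim.res_min k hk n T hT h1 h2]


/-- The distance-`k` dimension of the path `Pₙ` (`n ≥ 2`, `k ≥ 1`). -/
theorem stmt15 (n k : ℕ) (hn : 2 ≤ n) (hk : 1 ≤ k) :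
    (n ≤ k + 2 → dimK (pathGraph n) k = 1) ∧
    (k + 3 ≤ n → n ≤ 3 * k + 3 → dimK (pathGraph n) k = 2) ∧
    (3 * k + 4 ≤ n →
      ((n % (3 * k + 2) ≤ k + 2 ∨ (3 * k + 6) / 2 ≤ n % (3 * k + 2)) →
        dimK (pathGraph n) k = (2 * n + 3 * k - 1) / (3 * k + 2)) ∧
      (k + 3 ≤ n % (3 * k + 2) ∧ n % (3 * k + 2) ≤ (3 * k + 6) / 2 - 1 →
        dimK (pathGraph n) k = (2 * n + 4 * k - 1) / (3 * k + 2))) := by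

  have hF0 : PathDim.F k 0 = 1 := by simp [PathDim.F]
  have hF1 : PathDim.F k 1 = k + 2 := by simp [PathDim.F]; omega
  have hF2 : PathDim.F k 2 = 3*k+3 := by
    have := PathDim.F_even k 1
    norm_num at this
    omega
  refine ⟨?_, ?_, ?_⟩
  · intro h
    apply dim_path n k 1 hk (by omega) le_rfl
    · rw [show (1:ℕ)-1 = 0 from rfl, hF0]; omega
    · rw [hF1]; omega
  · intro h3 h4
    apply dim_path n k 2 hk (by omega) (by omega)
    · rw [show (2:ℕ)-1 = 1 from rfl, hF1]; omega
    · rw [hF2]; omega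
  · intro hbig
    obtain ⟨t, r, hdm, hrq, hmod⟩ :
        ∃ t r, (3*k+2)*t + r = n ∧ r < 3*k+2 ∧ n % (3*k+2) = r :=
      ⟨n/(3*k+2), n%(3*k+2), Nat.div_add_mod n _, Nat.mod_lt n (by omega), rfl⟩
    have hq : 0 < 3*k+2 := by omega
    have ht1 : 1 ≤ t := by
      by_contra hc
      push_neg at hc
      have ht0 : t = 0 := by omega
      rw [ht0, Nat.mul_zero] at hdm
      omega
    obtain ⟨t1, rfl⟩ : ∃ t1, t = t1 + 1 := ⟨t-1, by omega⟩
    have e1 : (3*k+2)*(t1+1) = t1*(3*k+2) + (3*k+2) := by ring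
    have e2 : (t1+1)*(3*k+2) = t1*(3*k+2) + (3*k+2) := by ring
    have e3 : (t1+2)*(3*k+2) = t1*(3*k+2) + 2*(3*k+2) := by ring
    have e4 : (3*k+2)*(2*(t1+1)) = 2*((3*k+2)*(t1+1)) := by ring
    constructor
    · intro hAcase
      rw [hmod] at hAcase
      rcases hAcase with hA | hA
      · by_cases hr1 : r ≤ 1
        · -- T = 2*t1+2
          have hx : 2*n+3*k-1 = (3*k+2)*(2*(t1+1)) + (2*r+3*k-1) := by omega
          have hT : (2*n+3*k-1)/(3*k+2) = 2*t1+2 := by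
            rw [hx, PathDim.quot0 _ _ _ hq (by omega)]
            omega
          rw [hT]
          apply dim_path n k (2*t1+2) hk (by omega) (by omega)
          · rw [show 2*t1+2-1 = 2*t1+1 by omega, PathDim.F_odd]
            omega
          · rw [show 2*t1+2 = 2*(t1+1) by ring, PathDim.F_even]
            omega
        · -- 2 ≤ r ≤ k+2 : T = 2*t1+3
          have hx : 2*n+3*k-1 = (3*k+2)*(2*(t1+1)) + (2*r+3*k-1) := by omega
          have hT : (2*n+3*k-1)/(3*k+2) = 2*t1+3 := by
            rw [hx, PathDim.quot1 _ _ _ hq (by omega) (by omega)]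
            omega
          rw [hT]
          apply dim_path n k (2*t1+3) hk (by omega) (by omega)
          · rw [show 2*t1+3-1 = 2*(t1+1) by omega, PathDim.F_even]
            omega
          · rw [show 2*t1+3 = 2*(t1+1)+1 by ring, PathDim.F_odd]
            omega
      · -- big r : T = 2*t1+4
        have h2r : 3*k+5 ≤ 2*r := by omega
        have hx : 2*n+3*k-1 = (3*k+2)*(2*(t1+1)) + (2*r+3*k-1) := by omega
        have hT : (2*n+3*k-1)/(3*k+2) = 2*t1+4 := by
          rw [hx, PathDim.quot2 _ _ _ hq (by omega) (by omega)]
          omega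
        rw [hT]
        apply dim_path n k (2*t1+4) hk (by omega) (by omega)
        · rw [show 2*t1+4-1 = 2*(t1+1)+1 by omega, PathDim.F_odd]
          omega
        · rw [show 2*t1+4 = 2*(t1+2) by ring, PathDim.F_even]
          omega
    · rintro ⟨hB1, hB2⟩
      rw [hmod] at hB1 hB2
      have h2r : 2*r ≤ 3*k+4 := by omega
      have hx : 2*n+4*k-1 = (3*k+2)*(2*(t1+1)) + (2*r+4*k-1) := by omega
      have hT : (2*n+4*k-1)/(3*k+2) = 2*t1+4 := by
        rw [hx, PathDim.quot2 _ _ _ hq (by omega) (by omega)]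
        omega
      rw [hT]
      apply dim_path n k (2*t1+4) hk (by omega) (by omega)
      · rw [show 2*t1+4-1 = 2*(t1+1)+1 by omega, PathDim.F_odd]
        omega
      · rw [show 2*t1+4 = 2*(t1+2) by ring, PathDim.F_even]
        omega
end

section
/- If $G$ is a connected graph of order $n \ge 2$ and diameter $d \ge 1$, then for all integers $k \ge 1$, $\dim_k(G) \le n - \left(d + 1 - \lfloor \tfrac{2(d+1)+4k-1}{3k+2} \rfloor\right)$. -/
open SimpleGraph

section Aux
open Finset

private def GoodPt (k : ℕ) (A : Finset ℕ) (i : ℕ) : Prop :=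
  ∃ p ∈ A, 1 ≤ Nat.dist i p ∧ Nat.dist i p ≤ k ∧
    (p + (k+1) ∈ A ∨ (k+1 ≤ p ∧ p - (k+1) ∈ A) ∨ ∀ j, Nat.dist j p = Nat.dist i p → j = i)

private lemma goodPt_mono {k : ℕ} {A A' : Finset ℕ} (h : A ⊆ A') {i : ℕ} (hg : GoodPt k A i) :
    GoodPt k A' i := by
  obtain ⟨p, hp, h1, h2, h3⟩ := hg
  exact ⟨p, h hp, h1, h2, by
    rcases h3 with h3 | h3 | h3
    · exact Or.inl (h h3)
    · exact Or.inr (Or.inl ⟨h3.1, h h3.2⟩)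
    · exact Or.inr (Or.inr h3)⟩

private lemma natDist_def (a b : ℕ) : Nat.dist a b = (a - b) + (b - a) := rfl

private lemma build (k : ℕ) (hk : 1 ≤ k) (q : ℕ) : ∀ r : ℕ, r ≤ 3*k+1 →
    ∃ A : Finset ℕ, ∃ b : ℕ, 1 ≤ b ∧ b ≤ k+1 ∧
      (∀ m ∈ A, m < (3*k+2)*q + r + k + 3) ∧
      A.card ≤ 2*q + 2 + (if 2*k+1 ≤ r then 1 else 0) ∧
      ((3*k+2)*q + r + k + 2 - b) ∈ A ∧ (k+1 ≤ (3*k+2)*q + r + k + 2 - b) ∧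
      ((3*k+2)*q + r + k + 2 - b - (k+1)) ∈ A ∧
      (∀ i, i < (3*k+2)*q + r + k + 3 → i ∉ A →
        (GoodPt k A i ∨ i = (3*k+2)*q + r + k + 2)) := by
  induction q with
  | zero =>
    intro r hr
    by_cases hre : r ≤ 2*k
    · -- even base: pair {a, a+k+1}, b = min (r+1) (k+1), a = r+1-b
      refine ⟨{r + 1 - min (r+1) (k+1), r + 1 - min (r+1) (k+1) + (k+1)}, min (r+1) (k+1),
        by omega, by omega, ?_, ?_, ?_, ?_, ?_, ?_⟩
      · intro m hm; simp at hm; omega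
      · have h2 : ({r + 1 - min (r+1) (k+1), r + 1 - min (r+1) (k+1) + (k+1)} : Finset ℕ).card ≤ 2 :=
          (Finset.card_insert_le _ _).trans (by simp)
        simp only [if_neg (by omega : ¬ 2*k+1 ≤ r)]
        omega
      · simp; omega
      · omega
      · simp; omega
      · intro i hi hiA
        simp only [mem_insert, mem_singleton] at hiA
        push_neg at hiA
        set a := r + 1 - min (r+1) (k+1) with ha
        by_cases hc : i = 0*(3*k+2) + r + k + 2
        · exact Or.inr (by omega)
        left
        by_cases h1 : i < a
        · exact ⟨a, by simp, by simp [natDist_def]; omega, by simp [natDist_def]; omega,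
            Or.inl (by simp)⟩
        by_cases h2 : i < a + (k+1)
        · exact ⟨a, by simp, by simp [natDist_def]; omega, by simp [natDist_def]; omega,
            Or.inl (by simp)⟩
        · exact ⟨a + (k+1), by simp, by simp [natDist_def]; omega,
            by simp [natDist_def]; omega,
            Or.inr (Or.inl ⟨by omega, by simp; try omega⟩)⟩
    · -- odd base: {0, 2k+1, 3k+2}, b = r - 2k
      refine ⟨{0, 2*k+1, 3*k+2}, r - 2*k, by omega, by omega, ?_, ?_, ?_, ?_, ?_, ?_⟩
      · intro m hm; simp at hm; omega
      · have h3 : ({0, 2*k+1, 3*k+2} : Finset ℕ).card ≤ 3 :=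
          (Finset.card_insert_le _ _).trans
            (by have := Finset.card_insert_le (2*k+1) ({3*k+2} : Finset ℕ); simp at this ⊢; omega)
        simp only [if_pos (by omega : 2*k+1 ≤ r)]
        omega
      · simp; omega
      · omega
      · simp; omega
      · intro i hi hiA
        simp only [mem_insert, mem_singleton] at hiA
        push_neg at hiA
        by_cases hc : i = 0*(3*k+2) + r + k + 2
        · exact Or.inr (by omega)
        left
        by_cases h1 : i ≤ k
        · exact ⟨0, by simp, by simp [natDist_def]; omega, by simp [natDist_def]; omega,
            Or.inr (Or.inr (fun j hj => by simp [natDist_def] at hj ⊢; omega))⟩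
        by_cases h2 : i < 3*k+2
        · exact ⟨2*k+1, by simp, by simp [natDist_def]; omega, by simp [natDist_def]; omega,
            Or.inl (by simp; omega)⟩
        · exact ⟨3*k+2, by simp, by simp [natDist_def]; omega, by simp [natDist_def]; omega,
            Or.inr (Or.inl ⟨by omega, by simp; try omega⟩)⟩
  | succ q ih =>
    intro r hr
    obtain ⟨A, b, hb1, hb2, hlt, hcard, htop, htopge, htop2, hgood⟩ := ih r hr
    have hmul : (3*k+2)*(q+1) = (3*k+2)*q + (3*k+2) := by ring
    set T := (3*k+2)*q + r + k + 2 - b with hT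
    refine ⟨A ∪ {T + (2*k+1), T + (3*k+2)}, b, hb1, hb2, ?_, ?_, ?_, ?_, ?_, ?_⟩
    · intro m hm
      simp only [mem_union, mem_insert, mem_singleton] at hm
      rcases hm with hm | hm | hm
      · have := hlt m hm; omega
      · omega
      · omega
    · have h2 : ({T + (2*k+1), T + (3*k+2)} : Finset ℕ).card ≤ 2 :=
        (Finset.card_insert_le _ _).trans (by simp)
      have h4 := card_union_le A ({T + (2*k+1), T + (3*k+2)} : Finset ℕ)
      by_cases ho : 2*k+1 ≤ r <;> simp only [if_pos ho, ho, if_neg] at hcard ⊢ <;> omega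
    · have h5 : (3*k+2)*(q+1) + r + k + 2 - b = T + (3*k+2) := by omega
      rw [h5]; simp
    · omega
    · have h5 : (3*k+2)*(q+1) + r + k + 2 - b - (k+1) = T + (2*k+1) := by omega
      rw [h5]; simp
    · intro i hi hiA
      simp only [mem_union, mem_insert, mem_singleton] at hiA
      push_neg at hiA
      obtain ⟨hiA, hi1, hi2⟩ := hiA
      have hsub : A ⊆ A ∪ {T + (2*k+1), T + (3*k+2)} := subset_union_left
      by_cases hc : i = (3*k+2)*(q+1) + r + k + 2
      · exact Or.inr hc
      left
      by_cases hold : i ≤ T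
      · have hio := hgood i (by omega) hiA
        rcases hio with hg | hg
        · exact goodPt_mono hsub hg
        · omega
      · have hiT : T < i := by omega
        by_cases c1 : i ≤ T + k
        · exact ⟨T, hsub htop, by simp [natDist_def]; omega, by simp [natDist_def]; omega,
            Or.inr (Or.inl ⟨by omega, hsub htop2⟩)⟩
        by_cases c2 : i < T + (3*k+2)
        · refine ⟨T + (2*k+1), by simp, by simp [natDist_def]; omega,
            by simp [natDist_def]; omega, Or.inl ?_⟩
          have h6 : T + (2*k+1) + (k+1) = T + (3*k+2) := by omega
          rw [h6]; simp
        · refine ⟨T + (3*k+2), by simp, by simp [natDist_def]; omega,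
            by simp [natDist_def]; omega, Or.inr (Or.inl ⟨by omega, ?_⟩)⟩
          have h6 : T + (3*k+2) - (k+1) = T + (2*k+1) := by omega
          rw [h6]; simp

private lemma goodPt_resolves {k : ℕ} {A : Finset ℕ} {i j : ℕ} (hg : GoodPt k A i) (hne : i ≠ j) :
    ∃ m ∈ A, min (Nat.dist i m) (k+1) ≠ min (Nat.dist j m) (k+1) := by
  obtain ⟨p, hp, h1, h2, h3⟩ := hg
  by_contra hc
  push_neg at hc
  have hip := natDist_def i p
  have hjp := natDist_def j p
  have e1 := hc p hp
  have hdjp : Nat.dist j p = Nat.dist i p := by omega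
  rcases h3 with h3 | h3 | h3
  · have e2 := hc _ h3
    have hiq := natDist_def i (p + (k+1))
    have hjq := natDist_def j (p + (k+1))
    omega
  · have e2 := hc _ h3.2
    have hiq := natDist_def i (p - (k+1))
    have hjq := natDist_def j (p - (k+1))
    have := h3.1
    omega
  · exact hne (h3 j hdjp).symm

/-- The core combinatorial lemma: a small "landmark" set in `{0, …, D-1}` whose truncated
distances distinguish all non-landmarks. -/
private lemma core (k D : ℕ) (hk : 1 ≤ k) (hD : 2 ≤ D) :
    ∃ A : Finset ℕ, (∀ m ∈ A, m < D) ∧ A.card ≤ (2*D + 4*k - 1)/(3*k+2) ∧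
      ∀ i j, i < D → j < D → i ∉ A → j ∉ A → i ≠ j →
        ∃ m ∈ A, min (Nat.dist i m) (k+1) ≠ min (Nat.dist j m) (k+1) := by
  by_cases hsmall : D ≤ k + 2
  · refine ⟨{0}, by simp; omega, ?_, ?_⟩
    · simp only [card_singleton]
      rw [Nat.le_div_iff_mul_le (by omega)]
      omega
    · intro i j hi hj hiA hjA hne
      simp only [mem_singleton] at hiA hjA
      refine ⟨0, by simp, ?_⟩
      have h1 := natDist_def i 0
      have h2 := natDist_def j 0
      omega
  · -- D ≥ k+3
    have h0 : 0 < 3*k+2 := by omega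
    obtain ⟨A, b, hb1, hb2, hlt, hcard, -, -, -, hgood⟩ :=
      build k hk ((D - (k+3)) / (3*k+2)) ((D - (k+3)) % (3*k+2))
        (by have := Nat.mod_lt (D - (k+3)) h0; omega)
    have hdm := Nat.div_add_mod (D - (k+3)) (3*k+2)
    have hDeq : (3*k+2) * ((D - (k+3)) / (3*k+2)) + (D - (k+3)) % (3*k+2) + k + 3 = D := by
      omega
    rw [hDeq] at hlt hgood
    refine ⟨A, hlt, ?_, ?_⟩
    · calc A.card ≤ 2*((D - (k+3)) / (3*k+2)) + 2 + (if 2*k+1 ≤ (D - (k+3)) % (3*k+2) then 1 else 0) := hcard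
        _ ≤ (2*D + 4*k - 1)/(3*k+2) := by
          by_cases ho : 2*k+1 ≤ (D - (k+3)) % (3*k+2)
          · rw [if_pos ho, Nat.le_div_iff_mul_le (by omega)]
            have hexp : (2*((D - (k+3)) / (3*k+2)) + 2 + 1) * (3*k+2)
                = 2*((3*k+2) * ((D - (k+3)) / (3*k+2))) + (9*k+6) := by ring
            rw [hexp]; omega
          · rw [if_neg ho, Nat.le_div_iff_mul_le (by omega)]
            have hexp : (2*((D - (k+3)) / (3*k+2)) + 2 + 0) * (3*k+2)
                = 2*((3*k+2) * ((D - (k+3)) / (3*k+2))) + (6*k+4) := by ring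
            rw [hexp]; omega
    · intro i j hi hj hiA hjA hne
      rcases hgood i hi hiA with hg | hg
      · exact goodPt_resolves hg hne
      · rcases hgood j hj hjA with hg' | hg'
        · obtain ⟨m, hm, hmin⟩ := goodPt_resolves hg' (Ne.symm hne)
          exact ⟨m, hm, hmin.symm⟩
        · omega

end Aux

/-- If `G` is a connected graph of order `n ≥ 2` and diameter `d ≥ 1`, then
`dimₖ(G) ≤ n - (d + 1 - ⌊(2(d+1)+4k-1)/(3k+2)⌋)` for all `k ≥ 1`. -/
theorem stmt16 {V : Type*} [Fintype V] (G : SimpleGraph V) (n d : ℕ)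
    (hn : Fintype.card V = n) (h2 : 2 ≤ n) (hG : G.Connected) (hd : G.diam = d)
    (hd1 : 1 ≤ d) (k : ℕ) (hk : 1 ≤ k) :
    dimK G k ≤ n - (d + 1 - (2 * (d + 1) + 4 * k - 1) / (3 * k + 2)) := by
  classical
  have hNe : Nonempty V := Fintype.card_pos_iff.mp (by omega)
  obtain ⟨u, v, huv⟩ := G.exists_dist_eq_diam
  rw [hd] at huv
  obtain ⟨p, hp⟩ := (hG.preconnected u v).exists_walk_length_eq_dist
  rw [huv] at hp
  set x : ℕ → V := p.getVert with hx
  have hx0 : x 0 = u := p.getVert_zero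
  have hxd : x d = v := by rw [hx, ← hp]; exact p.getVert_length
  -- distances along the geodesic
  have hub : ∀ i j : ℕ, i ≤ j → j ≤ d → G.dist (x i) (x j) ≤ j - i := by
    intro i j hij hjd
    induction j, hij using Nat.le_induction with
    | base => simp
    | succ j hij ih =>
      have hadj : G.Adj (x j) (x (j+1)) := p.adj_getVert_succ (by omega)
      have h1 : G.dist (x j) (x (j+1)) = 1 := dist_eq_one_iff_adj.mpr hadj
      have htri := hG.dist_triangle (u := x i) (v := x j) (w := x (j+1))
      have := ih (by omega)
      omega
  have hexact : ∀ i j : ℕ, i ≤ j → j ≤ d → G.dist (x i) (x j) = j - i := by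
    intro i j hij hjd
    have h1 := hub i j hij hjd
    have h2 : G.dist u (x i) ≤ i := by
      have := hub 0 i (Nat.zero_le _) (by omega); rwa [hx0, Nat.sub_zero] at this
    have h3 : G.dist (x j) v ≤ d - j := by
      have := hub j d hjd le_rfl; rwa [hxd] at this
    have t1 := hG.dist_triangle (u := u) (v := x i) (w := v)
    have t2 := hG.dist_triangle (u := x i) (v := x j) (w := v)
    omega
  have hNat : ∀ i j : ℕ, i ≤ d → j ≤ d → G.dist (x i) (x j) = Nat.dist i j := by
    intro i j hi hj
    rcases le_total i j with h | h
    · rw [hexact i j h hj, Nat.dist_eq_sub_of_le h]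
    · rw [G.dist_comm, hexact j i h hi, Nat.dist_comm, Nat.dist_eq_sub_of_le h]
  have hinj : ∀ i j : ℕ, i ≤ d → j ≤ d → x i = x j → i = j := by
    intro i j hi hj he
    have h1 := hNat i j hi hj
    rw [he, SimpleGraph.dist_self] at h1
    have h2 : Nat.dist i j = (i - j) + (j - i) := rfl
    omega
  -- distK via dist
  have hedist : ∀ a b : V, G.edist a b = (G.dist a b : ℕ∞) := fun a b =>
    (ENat.coe_toNat (by rw [edist_ne_top_iff_reachable]; exact hG.preconnected a b)).symm
  have hdistK : ∀ a b : V, distK G k a b = ((min (G.dist a b) (k+1) : ℕ) : ℕ∞) := by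
    intro a b
    rw [distK, hedist a b]
    exact_mod_cast rfl
  have hdK0 : ∀ a : V, distK G k a a = 0 := by
    intro a; rw [hdistK, SimpleGraph.dist_self]; simp
  have hdKne0 : ∀ a b : V, a ≠ b → distK G k a b ≠ 0 := by
    intro a b hab h
    rw [hdistK] at h
    have : min (G.dist a b) (k+1) = 0 := by exact_mod_cast h
    have hne := (hG.pos_dist_of_ne hab)
    omega
  -- the resolving set
  obtain ⟨A, hAlt, hAcard, hAres⟩ := core k (d+1) hk (by omega)
  set R : Finset ℕ := (Finset.range (d+1)).filter (fun i => i ∉ A) with hR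
  set T : Finset V := R.image x with hT
  set S : Finset V := Finset.univ \ T with hS
  have hmemS : ∀ m ∈ A, x m ∈ S := by
    intro m hm
    simp only [hS, Finset.mem_sdiff, Finset.mem_univ, true_and, hT, Finset.mem_image]
    rintro ⟨i', hi', hxe⟩
    simp only [hR, Finset.mem_filter, Finset.mem_range] at hi'
    have heq : i' = m := hinj i' m (by omega) (by have := hAlt m hm; omega) hxe
    cases heq
    exact hi'.2 hm
  have hres : IsDistKResolving G k ↑S := by
    intro a b hab
    by_cases haT : a ∈ T
    · by_cases hbT : b ∈ T
      · obtain ⟨i, hi, hia⟩ := Finset.mem_image.mp haT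
        obtain ⟨j, hj, hjb⟩ := Finset.mem_image.mp hbT
        simp only [hR, Finset.mem_filter, Finset.mem_range] at hi hj
        have hij : i ≠ j := fun h => hab (by rw [← hia, ← hjb, h])
        obtain ⟨m, hm, hmin⟩ := hAres i j hi.1 hj.1 hi.2 hj.2 hij
        have hmd : m ≤ d := by have := hAlt m hm; omega
        refine ⟨x m, Finset.mem_coe.mpr (hmemS m hm), ?_⟩
        rw [← hia, ← hjb, hdistK, hdistK, hNat i m (by omega) hmd, hNat j m (by omega) hmd]
        exact fun hh => hmin (by exact_mod_cast hh)
      · exact ⟨b, Finset.mem_coe.mpr (Finset.mem_sdiff.mpr ⟨Finset.mem_univ _, hbT⟩),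
          fun hh => hdKne0 a b hab (by rw [hh, hdK0])⟩
    · exact ⟨a, Finset.mem_coe.mpr (Finset.mem_sdiff.mpr ⟨Finset.mem_univ _, haT⟩),
        fun hh => hdKne0 b a (Ne.symm hab) (by rw [← hh, hdK0])⟩
  -- counting
  have hAsub : A ⊆ Finset.range (d+1) := fun m hm => Finset.mem_range.mpr (hAlt m hm)
  have hReq : R = Finset.range (d+1) \ A := by
    ext i; simp [hR, Finset.mem_sdiff]
  have hRcard : R.card = (d+1) - A.card := by
    rw [hReq, Finset.card_sdiff_of_subset hAsub, Finset.card_range]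
  have hTcard : T.card = R.card := Finset.card_image_of_injOn (by
    intro i hi j hj he
    simp only [hR, Finset.coe_filter, Set.mem_setOf_eq, Finset.mem_range] at hi hj
    exact hinj i j (by omega) (by omega) he)
  have hScard : S.card = Fintype.card V - T.card := by
    rw [hS, Finset.card_sdiff_of_subset (Finset.subset_univ _), Finset.card_univ]
  have hTle : T.card ≤ Fintype.card V := (Finset.card_le_card (Finset.subset_univ _)).trans
    (le_of_eq Finset.card_univ)
  have hdim : dimK G k ≤ S.card := Nat.sInf_le ⟨S, hres, rfl⟩
  have hA2 : A.card ≤ d + 1 := by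
    have := Finset.card_le_card hAsub; rwa [Finset.card_range] at this
  have hgoal : (2 * (d + 1) + 4 * k - 1) / (3 * k + 2) = (2*(d+1) + 4*k - 1)/(3*k+2) := rfl
  omega
end
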